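/- Let K be a number field of degree n and let β be a nonzero algebraic integer of K. If Log(β) ∈ Q_k for some index k > r₁ (so that φ_k is a complex embedding) and φ_k(β) ∉ ℝ, then K = ℚ(β) and φ_k(β) is a complex Pisot number. -/

import Mathlib

/-!
Since `Log β ∈ Q_k`, `φ_k(β)` and its complex conjugate are the only conjugates of `β` of
modulus `≥ 1`; all the others lie in the open unit disk. As `φ_k(β)` is not real, `φ_k` is the
only embedding of `K` taking the value `φ_k(β)` at `β`, so `β` is a primitive element of `K`,
and the conjugates of `φ_k(β)` are exactly the values of the embeddings of `K` at `β`.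
-/

open Polynomial NumberField

noncomputable section

/-- A Pisot number: a real algebraic integer `θ > 1` all of whose other conjugates over `ℚ`
have modulus strictly smaller than `1`. -/
def IsPisotNumber (θ : ℝ) : Prop :=
  1 < θ ∧ IsIntegral ℤ θ ∧
    ∀ z : ℂ, aeval z (minpoly ℚ θ) = 0 → z ≠ (θ : ℂ) → ‖z‖ < 1

/-- A Salem number: a real algebraic integer `θ > 1` all of whose other conjugates over `ℚ`
have modulus at most `1`, with at least one conjugate of modulus exactly `1`. -/
def IsSalemNumber (θ : ℝ) : Prop :=
  1 < θ ∧ IsIntegral ℤ θ ∧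
    (∀ z : ℂ, aeval z (minpoly ℚ θ) = 0 → z ≠ (θ : ℂ) → ‖z‖ ≤ 1) ∧
    (∃ z : ℂ, aeval z (minpoly ℚ θ) = 0 ∧ ‖z‖ = 1)

/-- A complex Pisot number: a non-real algebraic integer `θ` with `|θ| > 1` all of whose
conjugates over `ℚ` other than `θ` and `conj θ` have modulus strictly smaller than `1`. -/
def IsComplexPisotNumber (θ : ℂ) : Prop :=
  θ.im ≠ 0 ∧ 1 < ‖θ‖ ∧ IsIntegral ℤ θ ∧
    ∀ z : ℂ, aeval z (minpoly ℚ θ) = 0 → z ≠ θ → z ≠ (starRingEnd ℂ) θ → ‖z‖ < 1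

variable {K : Type*} [Field K]

/-- The `Log` map `x ↦ (log|σ₁ x|, …, log|σ_{r₁} x|, 2 log|τ₁ x|, …, 2 log|τ_{r₂} x|)`,
indexed by `Fin r₁ ⊕ Fin r₂` (real embeddings first, then representatives of the complex
conjugate pairs). -/
def LogMap {r₁ r₂ : ℕ} (σ : Fin r₁ → (K →+* ℂ)) (τ : Fin r₂ → (K →+* ℂ)) (x : K) :
    Fin r₁ ⊕ Fin r₂ → ℝ :=
  Sum.elim (fun i => Real.log (‖σ i x‖))
    (fun i => 2 * Real.log (‖τ i x‖))

/-- `σ` is the family of the real embeddings of `K` and `τ` a system of representatives of the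
conjugate pairs of non-real embeddings: each `σ i` is real-valued, each `τ i` is not, and
`σ, τ, conj ∘ τ` together enumerate all embeddings `K →+* ℂ` without repetition. -/
def IsEmbeddingSystem {r₁ r₂ : ℕ} (σ : Fin r₁ → (K →+* ℂ)) (τ : Fin r₂ → (K →+* ℂ)) : Prop :=
  (∀ i, ∀ x : K, ((σ i) x).im = 0) ∧
  (∀ i, ∃ x : K, ((τ i) x).im ≠ 0) ∧
  Function.Bijective
    (Sum.elim σ (Sum.elim τ (fun i => (starRingEnd ℂ).comp (τ i))) :
      Fin r₁ ⊕ (Fin r₂ ⊕ Fin r₂) → (K →+* ℂ))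

/-- The open region `Q_k = {v : v_k > 0 and v_j < 0 for all j ≠ k}`. -/
def PosQuadrant {ι : Type*} (k : ι) : Set (ι → ℝ) :=
  {v | 0 < v k ∧ ∀ j, j ≠ k → v j < 0}

/-- The half line `l_{k,j} = {v : v_k > 0, v_j = -v_k, v_i = 0 for i ≠ k, j}`. -/
def SalemLine {ι : Type*} (k j : ι) : Set (ι → ℝ) :=
  {v | 0 < v k ∧ v j = -v k ∧ ∀ i, i ≠ k → i ≠ j → v i = 0}

section LogMap

variable {r₁ r₂ : ℕ} {σ : Fin r₁ → (K →+* ℂ)} {τ : Fin r₂ → (K →+* ℂ)} {x : K}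

theorem norm_lt_one_of_logMap_inl_neg {j : Fin r₁} (h : LogMap σ τ x (Sum.inl j) < 0) :
    ‖σ j x‖ < 1 :=
  not_le.mp fun h1 => h.not_ge (Real.log_nonneg h1)

theorem norm_lt_one_of_logMap_inr_neg {j : Fin r₂} (h : LogMap σ τ x (Sum.inr j) < 0) :
    ‖τ j x‖ < 1 :=
  not_le.mp fun h1 => h.not_ge (mul_nonneg zero_le_two (Real.log_nonneg h1))

theorem one_lt_norm_of_logMap_inr_pos {j : Fin r₂} (h : 0 < LogMap σ τ x (Sum.inr j)) :
    1 < ‖τ j x‖ :=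
  not_le.mp fun h1 => h.not_ge (mul_nonpos_of_nonneg_of_nonpos zero_le_two
    (Real.log_nonpos (norm_nonneg _) h1))

theorem norm_lt_one_of_logMap_mem_posQuadrant {i : Fin r₂}
    (hsurj : Function.Surjective (Sum.elim σ (Sum.elim τ fun j => (starRingEnd ℂ).comp (τ j))))
    (hQ : LogMap σ τ x ∈ PosQuadrant (Sum.inr i : Fin r₁ ⊕ Fin r₂)) (g : K →+* ℂ)
    (hg : g ≠ τ i) (hg' : g ≠ (starRingEnd ℂ).comp (τ i)) : ‖g x‖ < 1 := by
  obtain ⟨j | j | j, rfl⟩ := hsurj g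
  · exact norm_lt_one_of_logMap_inl_neg (hQ.2 _ Sum.inl_ne_inr)
  · have hji : j ≠ i := by rintro rfl; exact hg rfl
    exact norm_lt_one_of_logMap_inr_neg (hQ.2 _ (by simpa using hji))
  · have hji : j ≠ i := by rintro rfl; exact hg' rfl
    simpa only [Sum.elim_inr, RingHom.comp_apply, Complex.norm_conj] using
      norm_lt_one_of_logMap_inr_neg (hQ.2 _ (by simpa using hji))

end LogMap

section Conjugates

variable [NumberField K] {φ : K →+* ℂ} {x : K}

theorem adjoin_simple_eq_top_of_norm_lt_one (hx : (φ x).im ≠ 0) (hφ : 1 ≤ ‖φ x‖)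
    (h : ∀ g : K →+* ℂ, g ≠ φ → g ≠ (starRingEnd ℂ).comp φ → ‖g x‖ < 1) :
    IntermediateField.adjoin ℚ {x} = ⊤ := by
  rw [Field.primitive_element_iff_algHom_eq_of_eval ℚ ℂ (fun _ => IsAlgClosed.splits _) x
    φ.toRatAlgHom]
  intro ψ hψ
  by_contra hne
  have hψφ : (ψ : K →+* ℂ) ≠ φ := fun h => hne (by ext; simp [← h])
  have hψφ' : (ψ : K →+* ℂ) ≠ (starRingEnd ℂ).comp φ := fun h =>
    hx (Complex.conj_eq_iff_im.mp (by simpa using (RingHom.congr_fun h x).symm.trans hψ.symm))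
  exact (h ψ hψφ hψφ').not_ge (by simpa [← hψ] using hφ)

theorem isComplexPisotNumber_of_norm_lt_one (hint : IsIntegral ℤ x) (hx : (φ x).im ≠ 0)
    (hφ : 1 < ‖φ x‖) (h : ∀ g : K →+* ℂ, g ≠ φ → g ≠ (starRingEnd ℂ).comp φ → ‖g x‖ < 1) :
    IsComplexPisotNumber (φ x) := by
  refine ⟨hx, hφ, hint.map φ.toIntAlgHom, fun z hz hzφ hzφ' => ?_⟩
  change aeval z (minpoly ℚ (φ.toRatAlgHom x)) = 0 at hz
  rw [minpoly.algHom_eq φ.toRatAlgHom φ.injective] at hz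
  have hroot : z ∈ (minpoly ℚ x).rootSet ℂ :=
    (mem_rootSet_of_ne (minpoly.ne_zero (Algebra.IsIntegral.isIntegral x))).mpr hz
  obtain ⟨g, rfl⟩ := (Embeddings.range_eval_eq_rootSet_minpoly K ℂ x).symm.subset hroot
  exact h g (by rintro rfl; exact hzφ rfl) (by rintro rfl; exact hzφ' rfl)

end Conjugates

theorem complexPisot_of_logMap_mem_posQuadrant_complex_general
    {K : Type*} [Field K] [NumberField K] {r₁ r₂ : ℕ}
    (σ : Fin r₁ → (K →+* ℂ)) (τ : Fin r₂ → (K →+* ℂ))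
    (hsys : IsEmbeddingSystem σ τ)
    (β : K) (hint : IsIntegral ℤ β)
    (i : Fin r₂)
    (hQ : LogMap σ τ β ∈ PosQuadrant (Sum.inr i : Fin r₁ ⊕ Fin r₂))
    (hnotreal : ((τ i) β).im ≠ 0) :
    IntermediateField.adjoin ℚ {β} = ⊤ ∧ IsComplexPisotNumber ((τ i) β) := by
  have hsmall := norm_lt_one_of_logMap_mem_posQuadrant hsys.2.2.2 hQ
  have hbig : 1 < ‖τ i β‖ := one_lt_norm_of_logMap_inr_pos hQ.1
  exact ⟨adjoin_simple_eq_top_of_norm_lt_one hnotreal hbig.le hsmall,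
    isComplexPisotNumber_of_norm_lt_one hint hnotreal hbig hsmall⟩

/-- Proposition, part 3. If `β` is a nonzero algebraic integer of a number
field `K` of degree `n = r₁ + 2r₂`, `Log β ∈ Q_k` for an index `k` corresponding to a complex
embedding `φ_k = τ i`, and `φ_k(β) ∉ ℝ`, then `K = ℚ(β)` and `φ_k(β)` is a complex Pisot
number. -/
theorem complexPisot_of_logMap_mem_posQuadrant_complex
    {K : Type*} [Field K] [NumberField K] {r₁ r₂ : ℕ}
    (σ : Fin r₁ → (K →+* ℂ)) (τ : Fin r₂ → (K →+* ℂ))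
    (hsys : IsEmbeddingSystem σ τ)
    (hdeg : Module.finrank ℚ K = r₁ + 2 * r₂)
    (β : K) (hβ : β ≠ 0) (hint : IsIntegral ℤ β)
    (i : Fin r₂)
    (hQ : LogMap σ τ β ∈ PosQuadrant (Sum.inr i : Fin r₁ ⊕ Fin r₂))
    (hnotreal : ((τ i) β).im ≠ 0) :
    IntermediateField.adjoin ℚ {β} = ⊤ ∧ IsComplexPisotNumber ((τ i) β) :=
  complexPisot_of_logMap_mem_posQuadrant_complex_general σ τ hsys β hint i hQ hnotreal
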